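/- arXiv:2507.07647 — 6 statements merged into one kernel-verified Lean document; each statement's English description precedes it below -/
import Mathlib

section
/- Let σ ≥ 0, let γ be the Gaussian probability measure on ℝ with mean 0 and variance σ², let a ∈ ℝ, and for t ∈ ℝ define the vector h(t) = (sin t, −cos t) ∈ ℝ². Then the 2×2 second-moment matrix satisfies ∫ h(a+x)·h(a+x)ᵀ dγ(x) = exp(−2σ²)·h(a)·h(a)ᵀ + (1/2)·(1 − exp(−2σ²))·I₂, where I₂ is the 2×2 identity matrix. -/
/-! By the double-angle formulas, `h t (h t)ᵀ = (1 + R (2 t)) / 2`, where `R θ` is the reflection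
with entries `±cos θ`, `±sin θ`. Integrating `exp (i (d + c x))` against `N(m, v)` multiplies
`exp (i (d + c m))` by the characteristic-function factor `exp (-v c² / 2)`, so the mean of
`R (2 (a + x))` under `N(0, σ²)` is `exp (-2σ²) R (2 a)`; re-expanding `R (2 a) = 2 h a (h a)ᵀ - 1`
gives the identity. -/

open MeasureTheory ProbabilityTheory Real

/-- The regressor vector `h t = (sin t, -cos t)` of the linearized bearing model. -/
noncomputable def bearingRegressor (t : ℝ) : Fin 2 → ℝ := ![Real.sin t, -Real.cos t]

open scoped NNReal

section CharFun

variable {μ : Measure ℝ}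

lemma integral_cexp_add_mul_mul_I (c d : ℝ) :
    ∫ x, Complex.exp ((d + c * x : ℝ) * Complex.I) ∂μ =
      Complex.exp (d * Complex.I) * charFun μ c := by
  rw [charFun_apply_real, ← integral_const_mul]
  congr with x
  rw [← Complex.exp_add]
  push_cast
  congr 1
  ring

variable [IsFiniteMeasure μ]

lemma integrable_cexp_add_mul_mul_I (c d : ℝ) :
    Integrable (fun x : ℝ ↦ Complex.exp ((d + c * x : ℝ) * Complex.I)) μ :=
  (integrable_const (1 : ℝ)).mono' (by fun_prop)
    (ae_of_all _ fun _ ↦ (Complex.norm_exp_ofReal_mul_I _).le)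

lemma integral_cos_add_mul (c d : ℝ) :
    ∫ x, cos (d + c * x) ∂μ = (Complex.exp (d * Complex.I) * charFun μ c).re := by
  rw [← integral_cexp_add_mul_mul_I, ← RCLike.re_to_complex,
    ← integral_re (integrable_cexp_add_mul_mul_I c d)]
  simp only [RCLike.re_to_complex, Complex.exp_ofReal_mul_I_re]

lemma integral_sin_add_mul (c d : ℝ) :
    ∫ x, sin (d + c * x) ∂μ = (Complex.exp (d * Complex.I) * charFun μ c).im := by
  rw [← integral_cexp_add_mul_mul_I, ← RCLike.im_to_complex,
    ← integral_im (integrable_cexp_add_mul_mul_I c d)]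
  simp only [RCLike.im_to_complex, Complex.exp_ofReal_mul_I_im]

end CharFun

lemma cexp_mul_I_mul_charFun_gaussianReal (m : ℝ) (v : ℝ≥0) (c d : ℝ) :
    Complex.exp (d * Complex.I) * charFun (gaussianReal m v) c =
      (exp (-(v * c ^ 2 / 2)) : ℝ) * Complex.exp ((d + c * m : ℝ) * Complex.I) := by
  rw [charFun_gaussianReal, ← Complex.exp_add, Complex.ofReal_exp, ← Complex.exp_add]
  push_cast
  congr 1
  ring

lemma integral_cos_add_mul_gaussianReal (m : ℝ) (v : ℝ≥0) (c d : ℝ) :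
    ∫ x, cos (d + c * x) ∂gaussianReal m v = exp (-(v * c ^ 2 / 2)) * cos (d + c * m) := by
  rw [integral_cos_add_mul, cexp_mul_I_mul_charFun_gaussianReal, Complex.re_ofReal_mul,
    Complex.exp_ofReal_mul_I_re]

lemma integral_sin_add_mul_gaussianReal (m : ℝ) (v : ℝ≥0) (c d : ℝ) :
    ∫ x, sin (d + c * x) ∂gaussianReal m v = exp (-(v * c ^ 2 / 2)) * sin (d + c * m) := by
  rw [integral_sin_add_mul, cexp_mul_I_mul_charFun_gaussianReal, Complex.im_ofReal_mul,
    Complex.exp_ofReal_mul_I_im]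

noncomputable def reflectionMatrix (θ : ℝ) : Matrix (Fin 2) (Fin 2) ℝ :=
  !![-cos θ, -sin θ; -sin θ, cos θ]

lemma bearingRegressor_mul_bearingRegressor (t : ℝ) (i j : Fin 2) :
    bearingRegressor t i * bearingRegressor t j =
      (1 / 2) * ((1 : Matrix (Fin 2) (Fin 2) ℝ) i j + reflectionMatrix (2 * t) i j) := by
  fin_cases i <;> fin_cases j <;>
    simp only [bearingRegressor, reflectionMatrix, Matrix.one_apply, cos_two_mul, sin_two_mul,
      Matrix.of_apply, Matrix.cons_val', Matrix.cons_val_zero, Matrix.cons_val_one,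
      Matrix.cons_val_fin_one, Fin.isValue, Fin.zero_eta, Fin.mk_one, if_true, if_false,
      zero_ne_one, one_ne_zero] <;>
    linarith [sin_sq_add_cos_sq t]

lemma integrable_reflectionMatrix_apply {μ : Measure ℝ} [IsFiniteMeasure μ] (c d : ℝ)
    (i j : Fin 2) : Integrable (fun x ↦ reflectionMatrix (d + c * x) i j) μ := by
  fin_cases i <;> fin_cases j <;>
    exact (integrable_const (1 : ℝ)).mono'
      (by simp only [reflectionMatrix, Matrix.of_apply, Matrix.cons_val', Matrix.cons_val_zero,
        Matrix.cons_val_one, Matrix.cons_val_fin_one, Fin.isValue, Fin.zero_eta, Fin.mk_one]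
          fun_prop)
      (ae_of_all _ fun _ ↦ by simp [reflectionMatrix, abs_cos_le_one, abs_sin_le_one])

lemma integral_reflectionMatrix_apply_gaussianReal (m : ℝ) (v : ℝ≥0) (c d : ℝ) (i j : Fin 2) :
    ∫ x, reflectionMatrix (d + c * x) i j ∂gaussianReal m v =
      exp (-(v * c ^ 2 / 2)) * reflectionMatrix (d + c * m) i j := by
  fin_cases i <;> fin_cases j <;>
    simp [reflectionMatrix, integral_neg, integral_cos_add_mul_gaussianReal,
      integral_sin_add_mul_gaussianReal]

theorem gaussian_regressor_second_moment_general (σ : ℝ) (a : ℝ) :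
    ∀ i j : Fin 2,
      (∫ x, bearingRegressor (a + x) i * bearingRegressor (a + x) j
          ∂(gaussianReal 0 (σ ^ 2).toNNReal)) =
        Real.exp (-2 * σ ^ 2) * (bearingRegressor a i * bearingRegressor a j) +
          (1 / 2) * (1 - Real.exp (-2 * σ ^ 2)) * (1 : Matrix (Fin 2) (Fin 2) ℝ) i j := by
  intro i j
  have hexp : -(((σ ^ 2).toNNReal : ℝ) * 2 ^ 2 / 2) = -2 * σ ^ 2 := by
    rw [Real.coe_toNNReal _ (sq_nonneg σ)]
    ring
  calc ∫ x, bearingRegressor (a + x) i * bearingRegressor (a + x) j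
          ∂(gaussianReal 0 (σ ^ 2).toNNReal)
      _ = ∫ x, (1 / 2) * ((1 : Matrix (Fin 2) (Fin 2) ℝ) i j +
            reflectionMatrix (2 * a + 2 * x) i j) ∂(gaussianReal 0 (σ ^ 2).toNNReal) := by
        simp_rw [bearingRegressor_mul_bearingRegressor, mul_add 2 a]
      _ = (1 / 2) * ((1 : Matrix (Fin 2) (Fin 2) ℝ) i j +
            exp (-2 * σ ^ 2) * reflectionMatrix (2 * a) i j) := by
        rw [integral_const_mul, integral_add (integrable_const _)
          (integrable_reflectionMatrix_apply _ _ _ _),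
          integral_reflectionMatrix_apply_gaussianReal, hexp, integral_const]
        simp
      _ = _ := by
        rw [bearingRegressor_mul_bearingRegressor]
        ring

/-- Key bias computation for the BELS estimator: for Gaussian noise `x` with mean `0` and
variance `σ²`, the second-moment matrix of the noisy regressor `h (a + x)` equals
`exp (-2σ²) • h a (h a)ᵀ + Var(sin x) • I₂`, entrywise. -/
theorem gaussian_regressor_second_moment (σ : ℝ) (hσ : 0 ≤ σ) (a : ℝ) :
    ∀ i j : Fin 2,
      (∫ x, bearingRegressor (a + x) i * bearingRegressor (a + x) j
          ∂(gaussianReal 0 (σ ^ 2).toNNReal)) =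
        Real.exp (-2 * σ ^ 2) * (bearingRegressor a i * bearingRegressor a j) +
          (1 / 2) * (1 - Real.exp (-2 * σ ^ 2)) * (1 : Matrix (Fin 2) (Fin 2) ℝ) i j :=
  gaussian_regressor_second_moment_general σ a
end

section
/- Let C be a real symmetric positive semidefinite n×n matrix that is not invertible, let S be a real symmetric positive semidefinite n×n matrix, let v > 0, and suppose Q = C + v·S is positive definite. Then there exists a nonzero vector w ∈ ℝⁿ with S·w = (1/v)·(Q·w), and every real number λ admitting a nonzero x ∈ ℝⁿ with S·x = λ·(Q·x) satisfies λ ≤ 1/v. In other words, the largest generalized eigenvalue of the pair (S, Q) equals 1/v. -/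
/-!
A kernel vector of `C` is a generalized eigenvector of `(S, C + v • S)` with eigenvalue `1 / v`.
Conversely, pairing `S x = λ Q x` with `x` gives `λ v xᵀQx = v xᵀSx = xᵀQx - xᵀCx ≤ xᵀQx`,
and `xᵀQx > 0`.
-/

open Matrix

variable {ι : Type*} [Fintype ι]

theorem Matrix.mulVec_eq_one_div_smul_add_smul_mulVec_of_mulVec_eq_zero {K : Type*} [Field K]
    {C : Matrix ι ι K} (S : Matrix ι ι K) {v : K} (hv : v ≠ 0) {w : ι → K}
    (hw : C *ᵥ w = 0) : S *ᵥ w = (1 / v) • ((C + v • S) *ᵥ w) := by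
  rw [add_mulVec, hw, zero_add, smul_mulVec, smul_smul, one_div_mul_cancel hv, one_smul]

theorem Matrix.le_one_div_of_mulVec_eq_smul_add_smul_mulVec {C S : Matrix ι ι ℝ}
    (hC : C.PosSemidef) {v : ℝ} (hv : 0 < v) (hQ : (C + v • S).PosDef) {lam : ℝ}
    {x : ι → ℝ} (hx : x ≠ 0) (hEq : S *ᵥ x = lam • ((C + v • S) *ᵥ x)) : lam ≤ 1 / v := by
  have hq : 0 < x ⬝ᵥ (C + v • S) *ᵥ x := by
    simpa only [star_trivial] using hQ.dotProduct_mulVec_pos hx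
  have hc : 0 ≤ x ⬝ᵥ C *ᵥ x := by
    simpa only [star_trivial] using hC.dotProduct_mulVec_nonneg x
  have hs : x ⬝ᵥ S *ᵥ x = lam * (x ⬝ᵥ (C + v • S) *ᵥ x) := by
    rw [hEq, dotProduct_smul, smul_eq_mul]
  have hsplit : x ⬝ᵥ (C + v • S) *ᵥ x = x ⬝ᵥ C *ᵥ x + v * (x ⬝ᵥ S *ᵥ x) := by
    rw [add_mulVec, dotProduct_add, smul_mulVec, dotProduct_smul, smul_eq_mul]
  have hlam : lam * v * (x ⬝ᵥ (C + v • S) *ᵥ x) ≤ 1 * (x ⬝ᵥ (C + v • S) *ᵥ x) :=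
    calc lam * v * (x ⬝ᵥ (C + v • S) *ᵥ x) = v * (x ⬝ᵥ S *ᵥ x) := by rw [hs]; ring
      _ = x ⬝ᵥ (C + v • S) *ᵥ x - x ⬝ᵥ C *ᵥ x := by rw [hsplit]; ring
      _ ≤ 1 * (x ⬝ᵥ (C + v • S) *ᵥ x) := by linarith
  rw [le_div_iff₀ hv]
  exact le_of_mul_le_mul_right hlam hq

theorem largest_generalized_eigenvalue_eq_inv_var_general {n : ℕ}
    (C S : Matrix (Fin n) (Fin n) ℝ)
    (hC : C.PosSemidef) (hCsing : ¬IsUnit C.det)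
    (v : ℝ) (hv : 0 < v) (hQ : (C + v • S).PosDef) :
    (∃ w : Fin n → ℝ, w ≠ 0 ∧ S.mulVec w = (1 / v) • ((C + v • S).mulVec w)) ∧
      ∀ (lam : ℝ) (x : Fin n → ℝ), x ≠ 0 →
        S.mulVec x = lam • ((C + v • S).mulVec x) → lam ≤ 1 / v := by
  obtain ⟨w, hw0, hw⟩ := exists_mulVec_eq_zero_iff.mpr (not_ne_iff.mp fun h => hCsing h.isUnit)
  exact ⟨⟨w, hw0, mulVec_eq_one_div_smul_add_smul_mulVec_of_mulVec_eq_zero S hv.ne' hw⟩,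
    fun _ _ hx hEq => le_one_div_of_mulVec_eq_smul_add_smul_mulVec hC hv hQ hx hEq⟩

/-- The principle behind the paper's noise-variance estimator: if `C` is symmetric
positive semidefinite and singular, `S` is symmetric positive semidefinite, `v > 0`,
and `Q = C + v • S` is positive definite, then the largest generalized eigenvalue of
the pair `(S, Q)` equals `1 / v`. -/
theorem largest_generalized_eigenvalue_eq_inv_var {n : ℕ}
    (C S : Matrix (Fin n) (Fin n) ℝ)
    (hC : C.PosSemidef) (hCsing : ¬IsUnit C.det) (hS : S.PosSemidef)
    (v : ℝ) (hv : 0 < v) (hQ : (C + v • S).PosDef) :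
    (∃ w : Fin n → ℝ, w ≠ 0 ∧ S.mulVec w = (1 / v) • ((C + v • S).mulVec w)) ∧
      ∀ (lam : ℝ) (x : Fin n → ℝ), x ≠ 0 →
        S.mulVec x = lam • ((C + v • S).mulVec x) → lam ≤ 1 / v :=
  largest_generalized_eigenvalue_eq_inv_var_general C S hC hCsing v hv hQ
end

section
/- Let p⁰ ∈ ℝ² and let p₁, …, pₙ ∈ ℝ² with p_i ≠ p⁰ for each i, and suppose the points p₁, …, pₙ do not all lie on a single affine line. Then the 2×2 matrix I₂ − (1/n)·∑_{i=1}^n (p_i − p⁰)(p_i − p⁰)ᵀ/‖p_i − p⁰‖² is positive definite (in particular invertible). -/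
open Matrix

/-! For `x ≠ 0` the quadratic form of the matrix is the average over `i` of
`‖x‖² - (uᵢ ⬝ᵥ x)² / ‖uᵢ‖²` with `uᵢ = pᵢ - p⁰`. By Lagrange's identity in the plane this equals
`(uᵢ ⬝ᵥ Jx)² / ‖uᵢ‖² ≥ 0`, where `J` is the rotation by `π/2` (and it is `‖x‖²` when `uᵢ = 0`,
since `0⁻¹ = 0`). All terms vanish only if every `uᵢ` is orthogonal to `Jx`, i.e. every `pᵢ` lies
on the line `{q | q ⬝ᵥ Jx = p⁰ ⬝ᵥ Jx}`. -/

theorem dotProduct_self_pos {m : Type*} [Fintype m] {v : m → ℝ} (hv : v ≠ 0) : 0 < v ⬝ᵥ v := by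
  simpa using dotProduct_star_self_pos_iff.mpr hv

theorem dotProduct_mulVec_one_sub_smul_sum {R m ι : Type*} [CommRing R] [Fintype m]
    [DecidableEq m] [Fintype ι] (c : R) (a : ι → R) (u : ι → m → R) (x : m → R) :
    x ⬝ᵥ ((1 - c • ∑ i, a i • vecMulVec (u i) (u i)) *ᵥ x) =
      x ⬝ᵥ x - c * ∑ i, a i * (u i ⬝ᵥ x) ^ 2 := by
  simp only [sub_mulVec, one_mulVec, smul_mulVec, sum_mulVec, vecMulVec_mulVec, op_smul_eq_smul,
    dotProduct_comm x, sub_dotProduct, smul_dotProduct, sum_dotProduct, smul_eq_mul, sq]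

theorem isHermitian_one_sub_smul_sum_vecMulVec {m ι : Type*} [Fintype m] [DecidableEq m]
    [Fintype ι] (c : ℝ) (a : ι → ℝ) (u : ι → m → ℝ) :
    (1 - c • ∑ i, a i • vecMulVec (u i) (u i)).IsHermitian := by
  simp [IsHermitian, transpose_sum, transpose_vecMulVec]

def rot90 (x : Fin 2 → ℝ) : Fin 2 → ℝ := ![-x 1, x 0]

theorem rot90_eq_zero_iff {x : Fin 2 → ℝ} : rot90 x = 0 ↔ x = 0 := by
  simp [rot90, funext_iff, Fin.forall_fin_two, and_comm]

theorem dotProduct_sq_add_dotProduct_rot90_sq (u x : Fin 2 → ℝ) :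
    (u ⬝ᵥ x) ^ 2 + (u ⬝ᵥ rot90 x) ^ 2 = (u ⬝ᵥ u) * (x ⬝ᵥ x) := by
  simp only [rot90, dotProduct, Fin.sum_univ_two, Matrix.cons_val_zero, Matrix.cons_val_one]
  ring

theorem inv_dotProduct_self_mul_sq_le (u x : Fin 2 → ℝ) :
    (u ⬝ᵥ u)⁻¹ * (u ⬝ᵥ x) ^ 2 ≤ x ⬝ᵥ x := by
  rcases eq_or_ne u 0 with rfl | hu
  · simpa using dotProduct_star_self_nonneg x
  rw [inv_mul_le_iff₀ (dotProduct_self_pos hu)]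
  linarith [dotProduct_sq_add_dotProduct_rot90_sq u x, sq_nonneg (u ⬝ᵥ rot90 x)]

theorem inv_dotProduct_self_mul_sq_lt {u x : Fin 2 → ℝ} (h : u ⬝ᵥ rot90 x ≠ 0) :
    (u ⬝ᵥ u)⁻¹ * (u ⬝ᵥ x) ^ 2 < x ⬝ᵥ x := by
  have hu : u ≠ 0 := by rintro rfl; simp at h
  rw [inv_mul_lt_iff₀ (dotProduct_self_pos hu)]
  linarith [dotProduct_sq_add_dotProduct_rot90_sq u x, sq_pos_of_ne_zero h]

theorem posDef_one_sub_inv_card_smul_sum_vecMulVec {ι : Type*} [Fintype ι]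
    (u : ι → Fin 2 → ℝ) (hspan : ∀ θ, (∀ i, u i ⬝ᵥ θ = 0) → θ = 0) :
    (1 - (Fintype.card ι : ℝ)⁻¹ • ∑ i, (u i ⬝ᵥ u i)⁻¹ • vecMulVec (u i) (u i)).PosDef := by
  refine posDef_iff_dotProduct_mulVec.mpr ⟨isHermitian_one_sub_smul_sum_vecMulVec _ _ _, ?_⟩
  intro x hx
  rw [star_trivial, dotProduct_mulVec_one_sub_smul_sum]
  obtain ⟨j, hj⟩ : ∃ j, u j ⬝ᵥ rot90 x ≠ 0 := by
    by_contra! h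
    exact hx (rot90_eq_zero_iff.mp (hspan _ h))
  have hcard : (0 : ℝ) < Fintype.card ι := Nat.cast_pos.mpr (Fintype.card_pos_iff.mpr ⟨j⟩)
  have hsum : ∑ i, (u i ⬝ᵥ u i)⁻¹ * (u i ⬝ᵥ x) ^ 2 < Fintype.card ι * (x ⬝ᵥ x) := by
    simpa only [Finset.sum_const, Finset.card_univ, nsmul_eq_mul] using
      Finset.sum_lt_sum (fun i _ => inv_dotProduct_self_mul_sq_le (u i) x)
        ⟨j, Finset.mem_univ j, inv_dotProduct_self_mul_sq_lt hj⟩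
  rw [sub_pos, inv_mul_lt_iff₀ hcard]
  exact hsum

theorem gram_matrix_posdef_of_noncollinear_general {n : ℕ}
    (p0 : Fin 2 → ℝ) (p : Fin n → Fin 2 → ℝ)
    (hline : ¬∃ (θ : Fin 2 → ℝ) (c : ℝ), θ ≠ 0 ∧ ∀ i, p i ⬝ᵥ θ = c) :
    ((1 : Matrix (Fin 2) (Fin 2) ℝ) -
        (n : ℝ)⁻¹ • ∑ i, ((p i - p0) ⬝ᵥ (p i - p0))⁻¹ •
          Matrix.vecMulVec (p i - p0) (p i - p0)).PosDef ∧
      IsUnit ((1 : Matrix (Fin 2) (Fin 2) ℝ) -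
        (n : ℝ)⁻¹ • ∑ i, ((p i - p0) ⬝ᵥ (p i - p0))⁻¹ •
          Matrix.vecMulVec (p i - p0) (p i - p0)).det := by
  have hspan : ∀ θ, (∀ i, (p i - p0) ⬝ᵥ θ = 0) → θ = 0 := by
    intro θ hθ
    by_contra hθ0
    refine hline ⟨θ, p0 ⬝ᵥ θ, hθ0, fun i => ?_⟩
    rw [← sub_eq_zero, ← sub_dotProduct]
    exact hθ i
  have hM := posDef_one_sub_inv_card_smul_sum_vecMulVec (fun i => p i - p0) hspan
  rw [Fintype.card_fin] at hM
  exact ⟨hM, hM.det_pos.ne'.isUnit⟩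

/-- Non-singularity of the noise-free Gram matrix (Proposition 1): if the sensors
`p₁, …, pₙ ∈ ℝ²` are all distinct from the source `p⁰` and do not all lie on one affine
line, then `I₂ - (1/n) ∑ᵢ (pᵢ - p⁰)(pᵢ - p⁰)ᵀ / ‖pᵢ - p⁰‖²` is positive definite,
in particular invertible. -/
theorem gram_matrix_posdef_of_noncollinear {n : ℕ} (hn : 0 < n)
    (p0 : Fin 2 → ℝ) (p : Fin n → Fin 2 → ℝ) (hne : ∀ i, p i ≠ p0)
    (hline : ¬∃ (θ : Fin 2 → ℝ) (c : ℝ), θ ≠ 0 ∧ ∀ i, p i ⬝ᵥ θ = c) :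
    ((1 : Matrix (Fin 2) (Fin 2) ℝ) -
        (n : ℝ)⁻¹ • ∑ i, ((p i - p0) ⬝ᵥ (p i - p0))⁻¹ •
          Matrix.vecMulVec (p i - p0) (p i - p0)).PosDef ∧
      IsUnit ((1 : Matrix (Fin 2) (Fin 2) ℝ) -
        (n : ℝ)⁻¹ • ∑ i, ((p i - p0) ⬝ᵥ (p i - p0))⁻¹ •
          Matrix.vecMulVec (p i - p0) (p i - p0)).det :=
  gram_matrix_posdef_of_noncollinear_general p0 p hline
end

section
/- Let μ be a probability measure on ℝ² and p⁰ = (x⁰, y⁰) ∈ ℝ². Assume there exists c > 0 such that ‖p − p⁰‖ ≥ c for μ-almost every p, and that μ(L) < 1 for every affine line L ⊂ ℝ². For p = (x, y) define w(p) = (y − y⁰, −(x − x⁰)) ∈ ℝ². Then the 2×2 matrix M⁰ = ∫ w(p)·w(p)ᵀ/‖p − p⁰‖⁴ dμ(p) is positive definite (in particular non-singular). -/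
/-!
Writing `v(p) = w(p) / ‖p - p⁰‖²`, the matrix `M⁰` is the Gram matrix `∫ v vᵀ dμ`, so
`xᵀ M⁰ x = ∫ (x ⬝ v)² dμ ≥ 0`. The entries are integrable because
`|vᵢ vⱼ| ≤ ‖v‖² = 1 / ‖p - p⁰‖² ≤ 1 / c²` almost everywhere. For `x ≠ 0`, `xᵀ M⁰ x = 0` would force
`x ⬝ w(p) = (p - p⁰) ⬝ (-x₁, x₀)` to vanish almost everywhere, i.e. `μ` to be carried by an
affine line.
-/

open Matrix MeasureTheory

section IntegralGram

variable {α n : Type*} [Fintype n] [MeasurableSpace α] {μ : Measure α} {v : α → n → ℝ}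

lemma sq_apply_le_dotProduct_self (y : n → ℝ) (i : n) : y i ^ 2 ≤ y ⬝ᵥ y := by
  rw [sq]
  exact Finset.single_le_sum (fun j _ => mul_self_nonneg (y j)) (Finset.mem_univ i)

lemma abs_mul_apply_le_dotProduct_self (y : n → ℝ) (i j : n) : |y i * y j| ≤ y ⬝ᵥ y := by
  have h := two_mul_le_add_sq |y i| |y j|
  rw [sq_abs, sq_abs] at h
  rw [abs_mul]
  linarith [sq_apply_le_dotProduct_self y i, sq_apply_le_dotProduct_self y j]

lemma sq_dotProduct_eq_sum_sum (x y : n → ℝ) :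
    (x ⬝ᵥ y) ^ 2 = ∑ i, ∑ j, x i * x j * (y i * y j) := by
  rw [sq, dotProduct, Finset.sum_mul_sum]
  exact Finset.sum_congr rfl fun i _ => Finset.sum_congr rfl fun j _ => by ring

lemma integrable_mul_apply_of_dotProduct_self_le [IsFiniteMeasure μ]
    (hv : ∀ i, AEStronglyMeasurable (fun a => v a i) μ) {C : ℝ}
    (hC : ∀ᵐ a ∂μ, v a ⬝ᵥ v a ≤ C) (i j : n) :
    Integrable (fun a => v a i * v a j) μ :=
  .of_bound ((hv i).mul (hv j)) C
    (hC.mono fun a ha => (abs_mul_apply_le_dotProduct_self (v a) i j).trans ha)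

lemma integrable_sq_dotProduct (hv : ∀ i j, Integrable (fun a => v a i * v a j) μ)
    (x : n → ℝ) : Integrable (fun a => (x ⬝ᵥ v a) ^ 2) μ := by
  simp_rw [sq_dotProduct_eq_sum_sum]
  exact integrable_finsetSum _ fun i _ => integrable_finsetSum _ fun j _ => (hv i j).const_mul _

lemma dotProduct_mulVec_integral_gram (hv : ∀ i j, Integrable (fun a => v a i * v a j) μ)
    (x : n → ℝ) :
    x ⬝ᵥ (of (fun i j => ∫ a, v a i * v a j ∂μ) *ᵥ x) = ∫ a, (x ⬝ᵥ v a) ^ 2 ∂μ := by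
  simp_rw [sq_dotProduct_eq_sum_sum]
  rw [integral_finsetSum _ fun i _ => integrable_finsetSum _ fun j _ => (hv i j).const_mul _]
  simp_rw [integral_finsetSum _ fun j _ => (hv _ j).const_mul _, integral_const_mul]
  simp only [dotProduct, mulVec, of_apply, Finset.mul_sum]
  exact Finset.sum_congr rfl fun i _ => Finset.sum_congr rfl fun j _ => by ring

lemma posDef_integral_gram (hv : ∀ i j, Integrable (fun a => v a i * v a j) μ)
    (hspan : ∀ x : n → ℝ, x ≠ 0 → ¬ ∀ᵐ a ∂μ, x ⬝ᵥ v a = 0) :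
    (of fun i j => ∫ a, v a i * v a j ∂μ).PosDef := by
  refine posDef_iff_dotProduct_mulVec.mpr ⟨?_, fun x hx => ?_⟩
  · ext i j
    simp only [conjTranspose_apply, of_apply, star_trivial, mul_comm]
  · rw [star_trivial, dotProduct_mulVec_integral_gram hv,
      integral_pos_iff_support_of_nonneg (fun a => sq_nonneg _) (integrable_sq_dotProduct hv x),
      pos_iff_ne_zero]
    simpa [ae_iff, Function.support] using hspan x hx

end IntegralGram

section PlaneRotation

lemma rot_dotProduct_self (u : Fin 2 → ℝ) : ![u 1, -u 0] ⬝ᵥ ![u 1, -u 0] = u ⬝ᵥ u := by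
  simp only [dotProduct, Fin.sum_univ_two, cons_val_zero, cons_val_one, cons_val_fin_one]
  ring

lemma dotProduct_rot (x u : Fin 2 → ℝ) : x ⬝ᵥ ![u 1, -u 0] = u ⬝ᵥ ![-x 1, x 0] := by
  simp only [dotProduct, Fin.sum_univ_two, cons_val_zero, cons_val_one, cons_val_fin_one]
  ring

lemma rot_ne_zero {x : Fin 2 → ℝ} (hx : x ≠ 0) : ![-x 1, x 0] ≠ 0 := by
  contrapose! hx
  ext i
  fin_cases i
  · simpa using congrFun hx 1
  · simpa using congrFun hx 0

lemma not_ae_dotProduct_rot_eq_zero {μ : Measure (Fin 2 → ℝ)} [IsProbabilityMeasure μ]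
    (p0 : Fin 2 → ℝ) (hline : ∀ (θ : Fin 2 → ℝ) (k : ℝ), θ ≠ 0 → μ {q | q ⬝ᵥ θ = k} < 1)
    {x : Fin 2 → ℝ} (hx : x ≠ 0) : ¬ ∀ᵐ p ∂μ, x ⬝ᵥ ![(p - p0) 1, -(p - p0) 0] = 0 := by
  intro hae
  set θ := ![-x 1, x 0]
  have hL : ∀ᵐ p ∂μ, p ∈ {q | q ⬝ᵥ θ = p0 ⬝ᵥ θ} := hae.mono fun p hp => by
    rwa [dotProduct_rot, sub_dotProduct, sub_eq_zero] at hp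
  have hL_full : μ {q | q ⬝ᵥ θ = p0 ⬝ᵥ θ} = 1 :=
    (measure_congr (ae_eq_univ.mpr hL)).trans measure_univ
  exact (hline θ _ (rot_ne_zero hx)).ne hL_full

end PlaneRotation

/-- Non-singularity of the asymptotic Fisher information matrix of the 2-D AOA model
(Lemma 3): if the sensor distribution `μ` keeps almost every sensor at distance at
least `c > 0` from the source `p⁰ = (x⁰, y⁰)` and puts mass `< 1` on every affine line,
then, with `w(p) = (y - y⁰, -(x - x⁰))`, the matrix
`M⁰ = ∫ w(p) w(p)ᵀ / ‖p - p⁰‖⁴ dμ(p)` (entrywise integral) is positive definite, in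
particular non-singular. -/
theorem fisher_information_posdef
    (μ : Measure (Fin 2 → ℝ)) [IsProbabilityMeasure μ] (p0 : Fin 2 → ℝ)
    (c : ℝ) (hc : 0 < c)
    (hfar : ∀ᵐ p ∂μ, c ≤ Real.sqrt ((p - p0) ⬝ᵥ (p - p0)))
    (hline : ∀ (θ : Fin 2 → ℝ) (k : ℝ), θ ≠ 0 → μ {q | q ⬝ᵥ θ = k} < 1) :
    (Matrix.of fun i j : Fin 2 =>
        ∫ p, (![p 1 - p0 1, -(p 0 - p0 0)] i * ![p 1 - p0 1, -(p 0 - p0 0)] j) /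
          ((p - p0) ⬝ᵥ (p - p0)) ^ 2 ∂μ).PosDef ∧
      IsUnit (Matrix.of fun i j : Fin 2 =>
        ∫ p, (![p 1 - p0 1, -(p 0 - p0 0)] i * ![p 1 - p0 1, -(p 0 - p0 0)] j) /
          ((p - p0) ⬝ᵥ (p - p0)) ^ 2 ∂μ).det := by
  set v : (Fin 2 → ℝ) → Fin 2 → ℝ :=
    fun p => ((p - p0) ⬝ᵥ (p - p0))⁻¹ • ![(p - p0) 1, -(p - p0) 0]
  have hfar_sq : ∀ᵐ p ∂μ, c ^ 2 ≤ (p - p0) ⬝ᵥ (p - p0) :=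
    hfar.mono fun p hp => (Real.le_sqrt' hc).mp hp
  have hvv : ∀ᵐ p ∂μ, v p ⬝ᵥ v p ≤ (c ^ 2)⁻¹ := hfar_sq.mono fun p hp => by
    have hD : 0 < (p - p0) ⬝ᵥ (p - p0) := (pow_pos hc 2).trans_le hp
    simp only [v, smul_dotProduct, dotProduct_smul, rot_dotProduct_self, smul_eq_mul,
      inv_mul_cancel₀ hD.ne', mul_one]
    exact inv_anti₀ (pow_pos hc 2) hp
  have hint := integrable_mul_apply_of_dotProduct_self_le (fun i => by fun_prop) hvv
  have hspan : ∀ x : Fin 2 → ℝ, x ≠ 0 → ¬ ∀ᵐ p ∂μ, x ⬝ᵥ v p = 0 := fun x hx hv0 =>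
    not_ae_dotProduct_rot_eq_zero p0 hline hx <| (hv0.and hfar_sq).mono fun p ⟨hp, hD⟩ => by
      simp only [v, dotProduct_smul, smul_eq_mul, mul_eq_zero, inv_eq_zero] at hp
      exact hp.resolve_left ((pow_pos hc 2).trans_le hD).ne'
  have hpos : (of fun i j => ∫ p, v p i * v p j ∂μ).PosDef := posDef_integral_gram hint hspan
  have hentry : ∀ (p : Fin 2 → ℝ) (i j : Fin 2),
      ![p 1 - p0 1, -(p 0 - p0 0)] i * ![p 1 - p0 1, -(p 0 - p0 0)] j /
        ((p - p0) ⬝ᵥ (p - p0)) ^ 2 = v p i * v p j := fun p i j => by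
    simp only [v, Pi.smul_apply, smul_eq_mul, Pi.sub_apply]
    ring
  simp_rw [hentry]
  exact ⟨hpos, isUnit_iff_ne_zero.mpr hpos.det_pos.ne'⟩
end

section
/- Let μ be a probability measure on ℝ², and let p = (x, y) and p⁰ = (x⁰, y⁰) be two distinct points of ℝ². Assume that for μ-almost every p̃ = (x̃, ỹ) both x̃ ≠ x and x̃ ≠ x⁰, and that μ(L) < 1 for every affine line L ⊂ ℝ². Then ∫ (arctan((ỹ − y)/(x̃ − x)) − arctan((ỹ − y⁰)/(x̃ − x⁰)))² dμ(p̃) > 0. -/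
open Matrix MeasureTheory

/-!
If the integrand vanished `μ`-a.e., then for a.e. sensor `q` the slopes of `q - p` and `q - p⁰`
would agree (arctan is injective), i.e. `q` would lie on the line through `p` and `p⁰`.
That line would then carry full mass, contradicting `μ L < 1`.
-/

lemma MeasureTheory.measure_compl_pos_of_lt_one {α : Type*} [MeasurableSpace α]
    {μ : Measure α} [IsProbabilityMeasure μ] {s : Set α} (hs : μ s < 1) : 0 < μ sᶜ := by
  refine pos_iff_ne_zero.2 fun hcompl => hs.not_ge ?_
  simpa [hcompl] using measure_univ_le_add_compl (μ := μ) s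

lemma Real.abs_arctan_sub_arctan_le_pi (a b : ℝ) :
    |Real.arctan a - Real.arctan b| ≤ Real.pi := by
  have := Real.neg_pi_div_two_lt_arctan a
  have := Real.arctan_lt_pi_div_two a
  have := Real.neg_pi_div_two_lt_arctan b
  have := Real.arctan_lt_pi_div_two b
  rw [abs_le]
  constructor <;> linarith

lemma integrable_sq_arctan_sub_arctan {α : Type*} [MeasurableSpace α] {μ : Measure α}
    [IsFiniteMeasure μ] {g h : α → ℝ} (hg : AEStronglyMeasurable g μ)
    (hh : AEStronglyMeasurable h μ) :
    Integrable (fun x => (Real.arctan (g x) - Real.arctan (h x)) ^ 2) μ := by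
  refine (integrable_const (Real.pi ^ 2)).mono' ?_ (ae_of_all _ fun x => ?_)
  · exact ((Real.continuous_arctan.comp_aestronglyMeasurable hg).sub
      (Real.continuous_arctan.comp_aestronglyMeasurable hh)).pow 2
  · rw [Real.norm_eq_abs, abs_pow]
    gcongr
    exact Real.abs_arctan_sub_arctan_le_pi _ _

def lineNormal (p p0 : Fin 2 → ℝ) : Fin 2 → ℝ := ![p0 1 - p 1, p 0 - p0 0]

lemma lineNormal_ne_zero {p p0 : Fin 2 → ℝ} (hne : p ≠ p0) : lineNormal p p0 ≠ 0 := by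
  intro h
  have h0 := congrFun h 0
  have h1 := congrFun h 1
  simp only [lineNormal, cons_val_zero, cons_val_one, Pi.zero_apply] at h0 h1
  exact hne (funext fun i => by fin_cases i <;> simp <;> linarith)

lemma dotProduct_lineNormal_eq_of_slope_eq {p p0 q : Fin 2 → ℝ} (hp : q 0 ≠ p 0)
    (hp0 : q 0 ≠ p0 0) (hslope : (q 1 - p 1) / (q 0 - p 0) = (q 1 - p0 1) / (q 0 - p0 0)) :
    q ⬝ᵥ lineNormal p p0 = p ⬝ᵥ lineNormal p p0 := by
  rw [div_eq_div_iff (sub_ne_zero.2 hp) (sub_ne_zero.2 hp0)] at hslope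
  simp only [lineNormal, dotProduct, Fin.sum_univ_two, cons_val_zero, cons_val_one]
  linear_combination hslope

/-- Asymptotic identifiability of the 2-D AOA model (Lemma 1): if `p ≠ p⁰`, almost every
sensor `p̃` (w.r.t. the limiting sensor distribution `μ`) has first coordinate different
from those of `p` and `p⁰`, and `μ` puts mass `< 1` on every affine line, then the
limiting least-squares criterion separates `p` from `p⁰`:
`∫ (arctan((ỹ-y)/(x̃-x)) - arctan((ỹ-y⁰)/(x̃-x⁰)))² dμ(p̃) > 0`. -/
theorem aoa_identifiability_2d
    (μ : Measure (Fin 2 → ℝ)) [IsProbabilityMeasure μ]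
    (p p0 : Fin 2 → ℝ) (hne : p ≠ p0)
    (hx : ∀ᵐ pt ∂μ, pt 0 ≠ p 0 ∧ pt 0 ≠ p0 0)
    (hline : ∀ (θ : Fin 2 → ℝ) (k : ℝ), θ ≠ 0 → μ {q | q ⬝ᵥ θ = k} < 1) :
    0 < ∫ pt, (Real.arctan ((pt 1 - p 1) / (pt 0 - p 0)) -
        Real.arctan ((pt 1 - p0 1) / (pt 0 - p0 0))) ^ 2 ∂μ := by
  set L := {q : Fin 2 → ℝ | q ⬝ᵥ lineNormal p p0 = p ⬝ᵥ lineNormal p p0}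
  rw [integral_pos_iff_support_of_nonneg (fun _ => sq_nonneg _)
    (integrable_sq_arctan_sub_arctan
      (Measurable.aestronglyMeasurable (by fun_prop))
      (Measurable.aestronglyMeasurable (by fun_prop)))]
  have hoff_line : Lᶜ ≤ᵐ[μ] Function.support fun pt =>
      (Real.arctan ((pt 1 - p 1) / (pt 0 - p 0)) -
        Real.arctan ((pt 1 - p0 1) / (pt 0 - p0 0))) ^ 2 := by
    filter_upwards [hx] with q ⟨hp, hp0⟩ hqL hzero
    refine hqL (dotProduct_lineNormal_eq_of_slope_eq hp hp0 (Real.arctan_injective ?_))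
    simpa [sub_eq_zero] using hzero
  exact (measure_compl_pos_of_lt_one (hline _ _ (lineNormal_ne_zero hne))).trans_le
    (measure_mono_ae hoff_line)
end

section
/- Let μ be a probability measure on ℝ³, let σ_a > 0 and σ_e > 0, and let p = (x, y, z) and p⁰ = (x⁰, y⁰, z⁰) be two distinct points of ℝ³. Assume that for μ-almost every p̃ = (x̃, ỹ, z̃): x̃ ≠ x, x̃ ≠ x⁰, (x̃, ỹ) ≠ (x, y), and (x̃, ỹ) ≠ (x⁰, y⁰); and assume that for every affine line L ⊂ ℝ², μ({p̃ : (x̃, ỹ) ∈ L}) < 1. Then σ_a⁻²·∫ (arctan((ỹ − y)/(x̃ − x)) − arctan((ỹ − y⁰)/(x̃ − x⁰)))² dμ(p̃) + σ_e⁻²·∫ (arctan((z̃ − z)/√((x̃ − x)² + (ỹ − y)²)) − arctan((z̃ − z⁰)/√((x̃ − x⁰)² + (ỹ − y⁰)²)))² dμ(p̃) > 0. -/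
/-!
If the criterion vanished, both integrands would vanish `μ`-a.e., and since `arctan` is
injective the azimuth tangents, resp. the elevation tangents, of almost every sensor seen from
`p` and from `p0` would agree. When `p` and `p0` have distinct horizontal projections, equal
azimuths put almost every sensor's projection on the line through them, which the line
hypothesis forbids. Otherwise `p` and `p0` differ only in height, and then no sensor off their
common vertical sees them at the same elevation.
-/

open MeasureTheory Real

noncomputable section

def tanAzimuth (p q : Fin 3 → ℝ) : ℝ := (q 1 - p 1) / (q 0 - p 0)

def tanElevation (p q : Fin 3 → ℝ) : ℝ :=
  (q 2 - p 2) / √((q 0 - p 0) ^ 2 + (q 1 - p 1) ^ 2)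

end

@[fun_prop]
lemma measurable_tanAzimuth (p : Fin 3 → ℝ) : Measurable (tanAzimuth p) := by
  unfold tanAzimuth; fun_prop

@[fun_prop]
lemma measurable_tanElevation (p : Fin 3 → ℝ) : Measurable (tanElevation p) := by
  unfold tanElevation; fun_prop

lemma integral_sq_arctan_sub_arctan_pos {α : Type*} [MeasurableSpace α] {μ : Measure α}
    [IsFiniteMeasure μ] {u v : α → ℝ} (hu : AEMeasurable u μ) (hv : AEMeasurable v μ)
    (huv : ¬ u =ᵐ[μ] v) : 0 < ∫ x, (arctan (u x) - arctan (v x)) ^ 2 ∂μ := by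
  have hbound : ∀ x, ‖(arctan (u x) - arctan (v x)) ^ 2‖ ≤ π ^ 2 := fun x => by
    rw [norm_pow, Real.norm_eq_abs]
    gcongr
    have := neg_pi_div_two_lt_arctan (u x)
    have := arctan_lt_pi_div_two (u x)
    have := neg_pi_div_two_lt_arctan (v x)
    have := arctan_lt_pi_div_two (v x)
    exact abs_le.2 ⟨by linarith, by linarith⟩
  have hint : Integrable (fun x => (arctan (u x) - arctan (v x)) ^ 2) μ :=
    .of_bound (by fun_prop) _ (.of_forall hbound)
  refine (integral_nonneg fun x => sq_nonneg _).lt_of_ne' fun h => huv ?_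
  filter_upwards [(integral_eq_zero_iff_of_nonneg (fun x => sq_nonneg _) hint).1 h] with x hx
  exact arctan_injective (sub_eq_zero.1 (pow_eq_zero_iff two_ne_zero |>.1 hx))

lemma measure_eq_one_of_ae_mem {α : Type*} [MeasurableSpace α] {μ : Measure α}
    [IsProbabilityMeasure μ] {s : Set α} (h : ∀ᵐ x ∂μ, x ∈ s) : μ s = 1 :=
  (measure_congr (ae_eq_univ.2 h)).trans measure_univ

lemma sub_sq_add_sub_sq_pos {a b : ℝ × ℝ} (hab : a ≠ b) :
    0 < (a.1 - b.1) ^ 2 + (a.2 - b.2) ^ 2 := by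
  rcases eq_or_ne a.1 b.1 with h1 | h1
  · have h2 : a.2 - b.2 ≠ 0 := sub_ne_zero.2 fun h2 => hab (Prod.ext h1 h2)
    positivity
  · have := sub_ne_zero.2 h1
    positivity

section

variable {μ : Measure (Fin 3 → ℝ)} {p p0 : Fin 3 → ℝ}

/-- The right-hand side says that `(q 0, q 1)` lies on the line through `(p 0, p 1)` and
`(p0 0, p0 1)`. -/
lemma tanAzimuth_eq_iff {q : Fin 3 → ℝ} (hp : q 0 ≠ p 0) (hp0 : q 0 ≠ p0 0) :
    tanAzimuth p q = tanAzimuth p0 q ↔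
      q 0 * (p0 1 - p 1) + q 1 * (p 0 - p0 0) = p 0 * (p0 1 - p 1) + p 1 * (p 0 - p0 0) := by
  rw [tanAzimuth, tanAzimuth, div_eq_div_iff (sub_ne_zero.2 hp) (sub_ne_zero.2 hp0)]
  constructor <;> intro h <;> linear_combination h

lemma measure_line_eq_one_of_tanAzimuth_ae_eq [IsProbabilityMeasure μ]
    (hx : ∀ᵐ q ∂μ, q 0 ≠ p 0 ∧ q 0 ≠ p0 0) (h : tanAzimuth p =ᵐ[μ] tanAzimuth p0) :
    μ {q | q 0 * (p0 1 - p 1) + q 1 * (p 0 - p0 0) = p 0 * (p0 1 - p 1) + p 1 * (p 0 - p0 0)}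
      = 1 := by
  refine measure_eq_one_of_ae_mem ?_
  filter_upwards [h, hx] with q hq hxq
  exact (tanAzimuth_eq_iff hxq.1 hxq.2).1 hq

lemma eq_of_tanElevation_ae_eq [NeZero μ] (h0 : p 0 = p0 0) (h1 : p 1 = p0 1)
    (hx : ∀ᵐ q ∂μ, (q 0, q 1) ≠ (p 0, p 1)) (h : tanElevation p =ᵐ[μ] tanElevation p0) :
    p 2 = p0 2 := by
  obtain ⟨q, hq, hxq⟩ := (h.and hx).exists
  have hr : √((q 0 - p 0) ^ 2 + (q 1 - p 1) ^ 2) ≠ 0 :=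
    Real.sqrt_ne_zero'.2 (sub_sq_add_sub_sq_pos hxq)
  rw [tanElevation, tanElevation, ← h0, ← h1, div_left_inj' hr] at hq
  linarith

end

/-- Asymptotic identifiability of the 3-D AOA model (Lemma 5(i)): if `p ≠ p⁰` in ℝ³,
almost every sensor `p̃ = (x̃, ỹ, z̃)` (w.r.t. the limiting sensor distribution `μ`)
satisfies `x̃ ≠ x`, `x̃ ≠ x⁰`, `(x̃, ỹ) ≠ (x, y)`, `(x̃, ỹ) ≠ (x⁰, y⁰)`, and the
projection of `μ` onto the first two coordinates puts mass `< 1` on every affine line,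
then the limiting weighted least-squares criterion (azimuth noise variance `σ_a²`,
elevation noise variance `σ_e²`) separates `p` from `p⁰`. -/
theorem aoa_identifiability_3d
    (μ : Measure (Fin 3 → ℝ)) [IsProbabilityMeasure μ]
    (σa σe : ℝ) (hσa : 0 < σa) (hσe : 0 < σe)
    (p p0 : Fin 3 → ℝ) (hne : p ≠ p0)
    (hx : ∀ᵐ pt ∂μ, pt 0 ≠ p 0 ∧ pt 0 ≠ p0 0 ∧
      (pt 0, pt 1) ≠ (p 0, p 1) ∧ (pt 0, pt 1) ≠ (p0 0, p0 1))
    (hline : ∀ (θ : Fin 2 → ℝ) (k : ℝ), θ ≠ 0 →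
      μ {pt | pt 0 * θ 0 + pt 1 * θ 1 = k} < 1) :
    0 < (σa ^ 2)⁻¹ * ∫ pt, (Real.arctan ((pt 1 - p 1) / (pt 0 - p 0)) -
          Real.arctan ((pt 1 - p0 1) / (pt 0 - p0 0))) ^ 2 ∂μ +
        (σe ^ 2)⁻¹ * ∫ pt,
          (Real.arctan ((pt 2 - p 2) /
              Real.sqrt ((pt 0 - p 0) ^ 2 + (pt 1 - p 1) ^ 2)) -
            Real.arctan ((pt 2 - p0 2) /
              Real.sqrt ((pt 0 - p0 0) ^ 2 + (pt 1 - p0 1) ^ 2))) ^ 2 ∂μ := by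
  by_cases hxy : (p 0, p 1) = (p0 0, p0 1)
  · obtain ⟨h0, h1⟩ := Prod.ext_iff.1 hxy
    have hE : ¬ tanElevation p =ᵐ[μ] tanElevation p0 := fun h => hne <| by
      ext i; fin_cases i
      exacts [h0, h1, eq_of_tanElevation_ae_eq h0 h1 (hx.mono fun _ hq => hq.2.2.1) h]
    exact add_pos_of_nonneg_of_pos
      (mul_nonneg (by positivity) (integral_nonneg fun _ => sq_nonneg _))
      (mul_pos (by positivity) (integral_sq_arctan_sub_arctan_pos (by fun_prop) (by fun_prop) hE))
  · have hθ : ![p0 1 - p 1, p 0 - p0 0] ≠ 0 := fun hθ =>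
      hxy (Prod.ext (sub_eq_zero.1 (congrFun hθ 1)) (sub_eq_zero.1 (congrFun hθ 0)).symm)
    have hA : ¬ tanAzimuth p =ᵐ[μ] tanAzimuth p0 := fun h =>
      (hline _ _ hθ).ne <|
        measure_line_eq_one_of_tanAzimuth_ae_eq (hx.mono fun _ hq => ⟨hq.1, hq.2.1⟩) h
    exact add_pos_of_pos_of_nonneg
      (mul_pos (by positivity) (integral_sq_arctan_sub_arctan_pos (by fun_prop) (by fun_prop) hA))
      (mul_nonneg (by positivity) (integral_nonneg fun _ => sq_nonneg _))
end
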